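/- arXiv:2009.13327 — 2 statements merged into one kernel-verified Lean document; each statement's English description precedes it below -/
import Mathlib

section
/- Let x₀, y₀ ∈ ℝ and T > 0, c₀ > 0 satisfy |x₀| + |x₀ − y₀²| T ≤ c₀, |y₀| + |y₀ − x₀²| T ≤ c₀, |x₀| + c₀ T + c₀² T ≤ c₀, and |y₀| + c₀ T + c₀² T ≤ c₀. Define sequences of continuous functions on [0,T] by x⁰(t) = x₀, y⁰(t) = y₀, and x^{n+1}(t) = x₀ + ∫₀ᵗ xⁿ(s) ds − ∫₀ᵗ max_{τ∈[0,s]} (yⁿ(τ))² ds, y^{n+1}(t) = y₀ + ∫₀ᵗ yⁿ(s) ds − ∫₀ᵗ max_{τ∈[0,s]} (xⁿ(τ))² ds. Then for every n ∈ ℕ and every t ∈ [0,T]: |x^{n+1}(t) − xⁿ(t)| ≤ (c₀/T)(1 + 2c₀)ⁿ t^{n+1}/(n+1)! and |y^{n+1}(t) − yⁿ(t)| ≤ (c₀/T)(1 + 2c₀)ⁿ t^{n+1}/(n+1)!. -/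
/-!
Both components of the Picard map `u ↦ u₀ + ∫₀ᵗ u − ∫₀ᵗ max_{[0,s]} v²` preserve the sup-norm ball
of radius `c₀` on `[0, T]`, by the size assumptions on `x₀, y₀`. On that ball
`|max q² − max p²| ≤ max |q² − p²| ≤ 2c₀ max |q − p|`, so if both differences at step `n` are
bounded by `K sⁿ⁺¹`, those at step `n + 1` are bounded by `(1 + 2c₀) K tⁿ⁺²/(n + 2)`, which
propagates the factorial bound by induction from the first step `(x₀ − y₀²) t`.
-/

open Set MeasureTheory intervalIntegral

noncomputable section

def runningSupSq (g : ℝ → ℝ) (s : ℝ) : ℝ :=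
  sSup ((fun τ => g τ ^ 2) '' Icc 0 s)

def picardStep (u₀ : ℝ) (f g : ℝ → ℝ) (t : ℝ) : ℝ :=
  u₀ + (∫ s in (0:ℝ)..t, f s) - ∫ s in (0:ℝ)..t, runningSupSq g s

def picardMajorant (c T : ℝ) (n : ℕ) (t : ℝ) : ℝ :=
  c / T * (1 + 2 * c) ^ n * t ^ (n + 1) / (Nat.factorial (n + 1))

end

lemma abs_sq_sub_sq_le {a b c : ℝ} (ha : |a| ≤ c) (hb : |b| ≤ c) :
    |a ^ 2 - b ^ 2| ≤ 2 * c * |a - b| := by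
  rw [sq_sub_sq, abs_mul]
  gcongr
  linarith [abs_add_le a b]

lemma abs_integral_le_mul_pow_div {h : ℝ → ℝ} {K t : ℝ} {m : ℕ} (ht : 0 ≤ t)
    (hh : ∀ s ∈ Ioc 0 t, |h s| ≤ K * s ^ m) :
    |∫ s in (0:ℝ)..t, h s| ≤ K * t ^ (m + 1) / (m + 1) := by
  have hint : ∫ s in (0:ℝ)..t, K * s ^ m = K * t ^ (m + 1) / (m + 1) := by
    simp [integral_pow, mul_div_assoc]
  rw [← hint, ← Real.norm_eq_abs]
  exact norm_integral_le_of_norm_le ht (ae_of_all _ hh)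
    (by apply Continuous.intervalIntegrable; fun_prop)

section RunningSupSq

variable {g p q : ℝ → ℝ} {T c s : ℝ}

lemma sq_mem_upperBounds_image_sq (hg : ∀ τ ∈ Icc 0 T, |g τ| ≤ c) (hs : s ≤ T) :
    c ^ 2 ∈ upperBounds ((fun τ => g τ ^ 2) '' Icc 0 s) := by
  rintro _ ⟨τ, hτ, rfl⟩
  exact sq_le_sq.2 ((hg τ ⟨hτ.1, hτ.2.trans hs⟩).trans (le_abs_self c))

lemma sq_le_runningSupSq (hg : ∀ τ ∈ Icc 0 T, |g τ| ≤ c) (hs : s ≤ T) {τ : ℝ}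
    (hτ : τ ∈ Icc 0 s) : g τ ^ 2 ≤ runningSupSq g s :=
  le_csSup ⟨_, sq_mem_upperBounds_image_sq hg hs⟩ (mem_image_of_mem _ hτ)

lemma runningSupSq_le (hg : ∀ τ ∈ Icc 0 T, |g τ| ≤ c) (hs : s ∈ Icc 0 T) :
    runningSupSq g s ≤ c ^ 2 :=
  csSup_le ((nonempty_Icc.2 hs.1).image _) (sq_mem_upperBounds_image_sq hg hs.2)

lemma runningSupSq_nonneg (hg : ∀ τ ∈ Icc 0 T, |g τ| ≤ c) (hs : s ∈ Icc 0 T) :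
    0 ≤ runningSupSq g s :=
  (sq_nonneg _).trans (sq_le_runningSupSq hg hs.2 (left_mem_Icc.2 hs.1))

lemma monotoneOn_runningSupSq (hg : ∀ τ ∈ Icc 0 T, |g τ| ≤ c) :
    MonotoneOn (runningSupSq g) (Icc 0 T) := fun _ h₁ _ h₂ h₁₂ =>
  csSup_le_csSup ⟨_, sq_mem_upperBounds_image_sq hg h₂.2⟩ ((nonempty_Icc.2 h₁.1).image _)
    (image_mono (Icc_subset_Icc_right h₁₂))

lemma intervalIntegrable_runningSupSq (hg : ∀ τ ∈ Icc 0 T, |g τ| ≤ c) {t : ℝ}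
    (ht : t ∈ Icc 0 T) : IntervalIntegrable (runningSupSq g) volume 0 t := by
  apply MonotoneOn.intervalIntegrable
  rw [uIcc_of_le ht.1]
  exact (monotoneOn_runningSupSq hg).mono (Icc_subset_Icc_right ht.2)

lemma runningSupSq_sub_le {C : ℝ} (hp : ∀ τ ∈ Icc 0 T, |p τ| ≤ c) (hs : s ∈ Icc 0 T)
    (h : ∀ τ ∈ Icc 0 s, q τ ^ 2 - p τ ^ 2 ≤ C) : runningSupSq q s - runningSupSq p s ≤ C := by
  rw [sub_le_iff_le_add]
  refine csSup_le ((nonempty_Icc.2 hs.1).image _) ?_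
  rintro _ ⟨τ, hτ, rfl⟩
  linarith [h τ hτ, sq_le_runningSupSq hp hs.2 hτ]

lemma abs_runningSupSq_sub_le {C : ℝ} (hp : ∀ τ ∈ Icc 0 T, |p τ| ≤ c)
    (hq : ∀ τ ∈ Icc 0 T, |q τ| ≤ c) (hs : s ∈ Icc 0 T)
    (h : ∀ τ ∈ Icc 0 s, |q τ ^ 2 - p τ ^ 2| ≤ C) :
    |runningSupSq q s - runningSupSq p s| ≤ C :=
  abs_sub_le_iff.2
    ⟨runningSupSq_sub_le hp hs fun τ hτ => (abs_le.1 (h τ hτ)).2,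
      runningSupSq_sub_le hq hs fun τ hτ => by linarith [(abs_le.1 (h τ hτ)).1]⟩

lemma runningSupSq_eq_sq_of_eqOn {b : ℝ} (hg : ∀ τ ∈ Icc 0 T, g τ = b) (hs : s ∈ Icc 0 T) :
    runningSupSq g s = b ^ 2 := by
  have himage : (fun τ => g τ ^ 2) '' Icc 0 s = {b ^ 2} := by
    rw [← (nonempty_Icc.2 hs.1).image_const (b ^ 2)]
    exact image_congr fun τ hτ => by rw [hg τ ⟨hτ.1, hτ.2.trans hs.2⟩]
  rw [runningSupSq, himage, csSup_singleton]

end RunningSupSq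

section PicardStep

variable {u₀ c T t : ℝ} {f f' g g' : ℝ → ℝ}

lemma abs_picardStep_le (hf : ∀ s ∈ Icc 0 T, |f s| ≤ c) (hg : ∀ s ∈ Icc 0 T, |g s| ≤ c)
    (hu₀ : |u₀| + c * T + c ^ 2 * T ≤ c) (ht : t ∈ Icc 0 T) : |picardStep u₀ f g t| ≤ c := by
  have hc : 0 ≤ c := (abs_nonneg _).trans (hf t ht)
  have hmem : ∀ s ∈ uIoc 0 t, s ∈ Icc 0 T := fun s hs => by
    rw [uIoc_of_le ht.1] at hs
    exact ⟨hs.1.le, hs.2.trans ht.2⟩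
  have hIf := norm_integral_le_of_norm_le_const (a := 0) (b := t) (C := c) (f := f)
    fun s hs => hf s (hmem s hs)
  have hIg := norm_integral_le_of_norm_le_const (a := 0) (b := t) (C := c ^ 2)
    (f := runningSupSq g) fun s hs => by
      rw [Real.norm_eq_abs, abs_of_nonneg (runningSupSq_nonneg hg (hmem s hs))]
      exact runningSupSq_le hg (hmem s hs)
  rw [Real.norm_eq_abs, sub_zero, abs_of_nonneg ht.1] at hIf hIg
  have hct : c * t ≤ c * T := mul_le_mul_of_nonneg_left ht.2 hc
  have hc2t : c ^ 2 * t ≤ c ^ 2 * T := mul_le_mul_of_nonneg_left ht.2 (sq_nonneg c)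
  unfold picardStep
  linarith [abs_sub (u₀ + ∫ s in (0:ℝ)..t, f s) (∫ s in (0:ℝ)..t, runningSupSq g s),
    abs_add_le u₀ (∫ s in (0:ℝ)..t, f s)]

lemma picardStep_eq_of_eqOn {a b : ℝ} (hf : ∀ s ∈ Icc 0 T, f s = a)
    (hg : ∀ s ∈ Icc 0 T, g s = b) (ht : t ∈ Icc 0 T) :
    picardStep u₀ f g t = u₀ + (a - b ^ 2) * t := by
  have hmem : ∀ s ∈ uIcc 0 t, s ∈ Icc 0 T := fun s hs => by
    rw [uIcc_of_le ht.1] at hs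
    exact ⟨hs.1, hs.2.trans ht.2⟩
  rw [picardStep, integral_congr (g := fun _ => a) fun s hs => hf s (hmem s hs),
    integral_congr (g := fun _ => b ^ 2) fun s hs => runningSupSq_eq_sq_of_eqOn hg (hmem s hs)]
  simp only [intervalIntegral.integral_const, sub_zero, smul_eq_mul]
  ring

lemma abs_picardStep_sub_le {K : ℝ} {m : ℕ} (hf : ContinuousOn f (Icc 0 T))
    (hf' : ContinuousOn f' (Icc 0 T)) (hg : ∀ s ∈ Icc 0 T, |g s| ≤ c)
    (hg' : ∀ s ∈ Icc 0 T, |g' s| ≤ c) (hK : 0 ≤ K)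
    (hff' : ∀ s ∈ Icc 0 T, |f' s - f s| ≤ K * s ^ m)
    (hgg' : ∀ s ∈ Icc 0 T, |g' s - g s| ≤ K * s ^ m) (ht : t ∈ Icc 0 T) :
    |picardStep u₀ f' g' t - picardStep u₀ f g t| ≤ (1 + 2 * c) * K * t ^ (m + 1) / (m + 1) := by
  have hint : ∀ {φ : ℝ → ℝ}, ContinuousOn φ (Icc 0 T) → IntervalIntegrable φ volume 0 t :=
    fun hφ => (hφ.mono (Icc_subset_Icc_right ht.2)).intervalIntegrable_of_Icc ht.1
  have hdiff : picardStep u₀ f' g' t - picardStep u₀ f g t =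
      ∫ s in (0:ℝ)..t, (f' s - f s) - (runningSupSq g' s - runningSupSq g s) := by
    have hRg := intervalIntegrable_runningSupSq hg ht
    have hRg' := intervalIntegrable_runningSupSq hg' ht
    rw [integral_sub ((hint hf').sub (hint hf)) (hRg'.sub hRg), integral_sub (hint hf') (hint hf),
      integral_sub hRg' hRg, picardStep, picardStep]
    ring
  rw [hdiff]
  refine abs_integral_le_mul_pow_div ht.1 fun s hs => ?_
  have hs' : s ∈ Icc 0 T := ⟨hs.1.le, hs.2.trans ht.2⟩
  have hc : 0 ≤ c := (abs_nonneg _).trans (hg s hs')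
  have hR : |runningSupSq g' s - runningSupSq g s| ≤ 2 * c * (K * s ^ m) :=
    abs_runningSupSq_sub_le hg hg' hs' fun τ hτ => by
      have hτ' : τ ∈ Icc 0 T := ⟨hτ.1, hτ.2.trans hs'.2⟩
      calc |g' τ ^ 2 - g τ ^ 2| ≤ 2 * c * |g' τ - g τ| := abs_sq_sub_sq_le (hg' τ hτ') (hg τ hτ')
        _ ≤ 2 * c * (K * τ ^ m) := by gcongr; exact hgg' τ hτ'
        _ ≤ 2 * c * (K * s ^ m) := by gcongr; exacts [hτ.1, hτ.2]
  calc |(f' s - f s) - (runningSupSq g' s - runningSupSq g s)|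
      ≤ |f' s - f s| + |runningSupSq g' s - runningSupSq g s| := abs_sub _ _
    _ ≤ K * s ^ m + 2 * c * (K * s ^ m) := add_le_add (hff' s hs') hR
    _ = (1 + 2 * c) * K * s ^ m := by ring

lemma abs_picardStep_sub_le_picardMajorant_succ {n : ℕ} (hf : ContinuousOn f (Icc 0 T))
    (hf' : ContinuousOn f' (Icc 0 T)) (hg : ∀ s ∈ Icc 0 T, |g s| ≤ c)
    (hg' : ∀ s ∈ Icc 0 T, |g' s| ≤ c)
    (hff' : ∀ s ∈ Icc 0 T, |f' s - f s| ≤ picardMajorant c T n s)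
    (hgg' : ∀ s ∈ Icc 0 T, |g' s - g s| ≤ picardMajorant c T n s) (ht : t ∈ Icc 0 T) :
    |picardStep u₀ f' g' t - picardStep u₀ f g t| ≤ picardMajorant c T (n + 1) t := by
  have hT : 0 ≤ T := ht.1.trans ht.2
  have hc : 0 ≤ c := (abs_nonneg _).trans (hg 0 (left_mem_Icc.2 hT))
  have hmajorant (s : ℝ) : picardMajorant c T n s =
      c / T * (1 + 2 * c) ^ n / (Nat.factorial (n + 1)) * s ^ (n + 1) := by
    unfold picardMajorant; ring
  simp only [hmajorant] at hff' hgg'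
  convert abs_picardStep_sub_le hf hf' hg hg' (by positivity) hff' hgg' ht using 1
  rw [picardMajorant, Nat.factorial_succ (n + 1)]
  push_cast
  field_simp
  ring

lemma abs_picardStep_sub_le_picardMajorant_zero {a b : ℝ} (hT : 0 < T)
    (hf : ∀ s ∈ Icc 0 T, f s = a) (hg : ∀ s ∈ Icc 0 T, g s = b) (hab : |a - b ^ 2| * T ≤ c)
    (ht : t ∈ Icc 0 T) : |picardStep a f g t - f t| ≤ picardMajorant c T 0 t := by
  rw [picardStep_eq_of_eqOn hf hg ht, hf t ht, add_sub_cancel_left, abs_mul,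
    abs_of_nonneg ht.1, picardMajorant]
  simp only [pow_zero, mul_one, zero_add, pow_one, Nat.factorial_one, Nat.cast_one, div_one]
  exact mul_le_mul_of_nonneg_right ((le_div_iff₀ hT).2 hab) ht.1

end PicardStep

/-- Estimates on successive differences of the Picard iterates of the system with maxima
`ẋ = x − max_{[0,t]} y²`, `ẏ = y − max_{[0,t]} x²`:
`|x^{n+1}(t) − xⁿ(t)| ≤ (c₀/T)(1+2c₀)ⁿ t^{n+1}/(n+1)!` and similarly for `y`. -/
theorem picard_iterates_square_system_estimate (x₀ y₀ T c₀ : ℝ)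
    (hT : 0 < T) (hc₀ : 0 < c₀)
    (h1 : |x₀| + |x₀ - y₀ ^ 2| * T ≤ c₀) (h2 : |y₀| + |y₀ - x₀ ^ 2| * T ≤ c₀)
    (h3 : |x₀| + c₀ * T + c₀ ^ 2 * T ≤ c₀) (h4 : |y₀| + c₀ * T + c₀ ^ 2 * T ≤ c₀)
    (x y : ℕ → ℝ → ℝ)
    (hxc : ∀ n, ContinuousOn (x n) (Set.Icc 0 T)) (hyc : ∀ n, ContinuousOn (y n) (Set.Icc 0 T))
    (hx0 : ∀ t ∈ Set.Icc (0:ℝ) T, x 0 t = x₀) (hy0 : ∀ t ∈ Set.Icc (0:ℝ) T, y 0 t = y₀)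
    (hxrec : ∀ n, ∀ t ∈ Set.Icc (0:ℝ) T, x (n + 1) t =
      x₀ + (∫ s in (0:ℝ)..t, x n s)
        - ∫ s in (0:ℝ)..t, sSup ((fun τ => (y n τ) ^ 2) '' Set.Icc 0 s))
    (hyrec : ∀ n, ∀ t ∈ Set.Icc (0:ℝ) T, y (n + 1) t =
      y₀ + (∫ s in (0:ℝ)..t, y n s)
        - ∫ s in (0:ℝ)..t, sSup ((fun τ => (x n τ) ^ 2) '' Set.Icc 0 s)) :
    ∀ n, ∀ t ∈ Set.Icc (0:ℝ) T,
      |x (n + 1) t - x n t| ≤ (c₀ / T) * (1 + 2 * c₀) ^ n * t ^ (n + 1) / (Nat.factorial (n + 1)) ∧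
      |y (n + 1) t - y n t| ≤ (c₀ / T) * (1 + 2 * c₀) ^ n * t ^ (n + 1) / (Nat.factorial (n + 1)) := by
  replace hxrec : ∀ n, ∀ t ∈ Icc 0 T, x (n + 1) t = picardStep x₀ (x n) (y n) t := hxrec
  replace hyrec : ∀ n, ∀ t ∈ Icc 0 T, y (n + 1) t = picardStep y₀ (y n) (x n) t := hyrec
  have bounded (n : ℕ) : (∀ t ∈ Icc 0 T, |x n t| ≤ c₀) ∧ ∀ t ∈ Icc 0 T, |y n t| ≤ c₀ := by
    induction n with
    | zero =>
      have : 0 ≤ c₀ * T + c₀ ^ 2 * T := by positivity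
      exact ⟨fun t ht => by rw [hx0 t ht]; linarith, fun t ht => by rw [hy0 t ht]; linarith⟩
    | succ n ih =>
      exact ⟨fun t ht => by rw [hxrec n t ht]; exact abs_picardStep_le ih.1 ih.2 h3 ht,
        fun t ht => by rw [hyrec n t ht]; exact abs_picardStep_le ih.2 ih.1 h4 ht⟩
  intro n
  induction n with
  | zero =>
    refine fun t ht => ⟨?_, ?_⟩
    · rw [hxrec 0 t ht]
      exact abs_picardStep_sub_le_picardMajorant_zero hT hx0 hy0 (by linarith [abs_nonneg x₀]) ht
    · rw [hyrec 0 t ht]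
      exact abs_picardStep_sub_le_picardMajorant_zero hT hy0 hx0 (by linarith [abs_nonneg y₀]) ht
  | succ n ih =>
    refine fun t ht => ⟨?_, ?_⟩
    · rw [hxrec (n + 1) t ht, hxrec n t ht]
      exact abs_picardStep_sub_le_picardMajorant_succ (hxc n) (hxc (n + 1)) (bounded n).2
        (bounded (n + 1)).2 (fun s hs => (ih s hs).1) (fun s hs => (ih s hs).2) ht
    · rw [hyrec (n + 1) t ht, hyrec n t ht]
      exact abs_picardStep_sub_le_picardMajorant_succ (hyc n) (hyc (n + 1)) (bounded n).1
        (bounded (n + 1)).1 (fun s hs => (ih s hs).2) (fun s hs => (ih s hs).1) ht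
end

section
/- Let m ≥ 1, x₀ ∈ ℝ^m, f and g₁,…,g_m as follows: f : [0,∞) × ℝ^m × ℝ^m → ℝ^m continuous with ‖f(t,u₁,v₁) − f(t,u₂,v₂)‖ ≤ L(‖u₁−u₂‖ + ‖v₁−v₂‖) for t ∈ [0,T], u₁,u₂ ∈ ∏_{i=1}^m [x₀ᵢ−α, x₀ᵢ+α], v₁,v₂ ∈ ∏_{i=1}^m g_i([x₀ᵢ−α, x₀ᵢ+α]); g_i : ℝ → ℝ continuous with |g_i(x) − g_i(y)| ≤ L_α|x−y| on [x₀ᵢ−α, x₀ᵢ+α]; and M := max ‖f‖ on [0,T] × ∏ [x₀ᵢ−α, x₀ᵢ+α] × ∏ g_i([x₀ᵢ−α, x₀ᵢ+α]) > 0. Fix 0 < T̄ < min{α/M, 1/(L(1+L_α√m)), T}, let X := { x ∈ C([0,T̄]; ℝ^m) : ‖x(t) − x₀‖ ≤ α for all t ∈ [0,T̄] }, and define F : X → C([0,T̄]; ℝ^m) by F(x)(t) = x₀ + ∫₀ᵗ f(s, x(s), max_{τ∈[0,s]} g₁(x₁(τ)), …, max_{τ∈[0,s]} g_m(x_m(τ)))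 ds. Then F(X) ⊆ X and ‖F(x) − F(y)‖_∞ ≤ T̄ L (1 + √m L_α) ‖x − y‖_∞ for all x, y ∈ X; in particular F is a contraction on X. -/
open Set

/-!
The running maxima `s ↦ max_{[0,s]} gᵢ(xᵢ)` of a continuous path are continuous, stay in
`gᵢ([x₀ᵢ - α, x₀ᵢ + α])` while the path stays in the box, and move by at most `L_α ‖x - y‖_∞`
in each coordinate, hence by `√m L_α ‖x - y‖_∞` in norm. So for `x` in `X` the integrand stays
in the region where `‖f‖ ≤ M` (giving `‖F x - x₀‖ ≤ T̄ M < α`), and the Lipschitz bound on `f`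
makes the integrands of `F x` and `F y` differ by at most `L (1 + √m L_α) ‖x - y‖_∞`.
-/

theorem EuclideanSpace.norm_le_sqrt_card_mul {ι : Type*} [Fintype ι] (u : EuclideanSpace ℝ ι)
    {C : ℝ} (hC : 0 ≤ C) (h : ∀ i, |u i| ≤ C) : ‖u‖ ≤ √(Fintype.card ι) * C :=
  calc ‖u‖ = √(∑ i, ‖u i‖ ^ 2) := EuclideanSpace.norm_eq u
    _ ≤ √(∑ _ : ι, C ^ 2) := by
      gcongr with i
      exact h i
    _ = √(Fintype.card ι) * C := by
      rw [Finset.sum_const, Finset.card_univ, nsmul_eq_mul, Real.sqrt_mul (Nat.cast_nonneg _),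
        Real.sqrt_sq hC]

theorem EuclideanSpace.abs_apply_sub_le_norm_sub {ι : Type*} [Fintype ι]
    (u v : EuclideanSpace ℝ ι) (i : ι) : |u i - v i| ≤ ‖u - v‖ := by
  simpa only [Real.dist_eq, dist_eq_norm, Real.norm_eq_abs] using PiLp.dist_apply_le u v i

theorem EuclideanSpace.apply_mem_Icc_of_norm_sub_le {ι : Type*} [Fintype ι]
    {u v : EuclideanSpace ℝ ι} {r : ℝ} (h : ‖u - v‖ ≤ r) (i : ι) :
    u i ∈ Icc (v i - r) (v i + r) :=
  mem_Icc_iff_abs_le.1 <| (abs_sub_comm _ _).trans_le <|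
    (EuclideanSpace.abs_apply_sub_le_norm_sub u v i).trans h

theorem sSup_image_le_sSup_image_add {β : Type*} {K : Set β} {h₁ h₂ : β → ℝ} {C : ℝ}
    (hK : K.Nonempty) (hb₂ : BddAbove (h₂ '' K)) (hC : ∀ τ ∈ K, h₁ τ ≤ h₂ τ + C) :
    sSup (h₁ '' K) ≤ sSup (h₂ '' K) + C :=
  csSup_le (hK.image h₁) <| forall_mem_image.2 fun τ hτ =>
    (hC τ hτ).trans (add_le_add_left (le_csSup hb₂ (mem_image_of_mem h₂ hτ)) C)

theorem abs_sSup_image_sub_sSup_image_le {β : Type*} {K : Set β} {h₁ h₂ : β → ℝ} {C : ℝ}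
    (hK : K.Nonempty) (hb₁ : BddAbove (h₁ '' K)) (hb₂ : BddAbove (h₂ '' K))
    (hC : ∀ τ ∈ K, |h₁ τ - h₂ τ| ≤ C) : |sSup (h₁ '' K) - sSup (h₂ '' K)| ≤ C := by
  rw [abs_sub_le_iff]
  constructor
  · have := sSup_image_le_sSup_image_add hK hb₂ fun τ hτ =>
      sub_le_iff_le_add'.1 (abs_sub_le_iff.1 (hC τ hτ)).1
    linarith
  · have := sSup_image_le_sSup_image_add hK hb₁ fun τ hτ =>
      sub_le_iff_le_add'.1 (abs_sub_le_iff.1 (hC τ hτ)).2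
    linarith

-- Rescaling `[0, s]` to `[0, 1]` turns the running maximum into a supremum over a fixed
-- compact set of a jointly continuous function of `(s, τ)`.
theorem continuousOn_sSup_image_Icc {h : ℝ → ℝ} {b : ℝ} (hh : ContinuousOn h (Icc 0 b)) :
    ContinuousOn (fun s => sSup (h '' Icc 0 s)) (Icc 0 b) := by
  rcases lt_or_ge b 0 with hb | hb
  · simp [Icc_eq_empty_of_lt hb]
  set H := IccExtend hb ((Icc 0 b).domRestrict h)
  have hH : Continuous H := hh.domRestrict.Icc_extend'
  have hmax : Continuous fun s => sSup ((fun τ => H (s * τ)) '' Icc 0 1) :=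
    isCompact_Icc.continuous_sSup (f := fun s τ => H (s * τ)) (by fun_prop)
  refine hmax.continuousOn.congr fun s hs => ?_
  change sSup (h '' Icc 0 s) = sSup ((fun τ => H (s * τ)) '' Icc 0 1)
  rw [← image_image H (s * ·), image_mul_left_Icc hs.1 zero_le_one, mul_zero, mul_one]
  congr 1
  exact image_congr fun τ hτ =>
    (IccExtend_of_mem hb ((Icc 0 b).domRestrict h) ⟨hτ.1, hτ.2.trans hs.2⟩).symm

section Integral

variable {E : Type*} [NormedAddCommGroup E] [NormedSpace ℝ E] {φ ψ : ℝ → E} {a b t C : ℝ}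

theorem ContinuousOn.continuousOn_primitive_Icc (hφ : ContinuousOn φ (Icc a b)) :
    ContinuousOn (fun t => ∫ s in a..t, φ s) (Icc a b) := by
  rcases lt_or_ge b a with hba | hab
  · simp [Icc_eq_empty_of_lt hba]
  exact (intervalIntegral.continuousOn_primitive_interval' (hφ.intervalIntegrable_of_Icc hab)
    left_mem_uIcc).mono Icc_subset_uIcc

theorem norm_intervalIntegral_le_mul (hC : 0 ≤ C) (ht : t ∈ Icc 0 b)
    (h : ∀ s ∈ Icc 0 b, ‖φ s‖ ≤ C) : ‖∫ s in (0:ℝ)..t, φ s‖ ≤ b * C := by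
  refine (intervalIntegral.norm_integral_le_of_norm_le_const fun s hs => h s ?_).trans ?_
  · rw [uIoc_of_le ht.1] at hs
    exact ⟨hs.1.le, hs.2.trans ht.2⟩
  · rw [sub_zero, abs_of_nonneg ht.1, mul_comm]
    exact mul_le_mul_of_nonneg_right ht.2 hC

theorem norm_intervalIntegral_sub_le_mul (hφ : ContinuousOn φ (Icc 0 b))
    (hψ : ContinuousOn ψ (Icc 0 b)) (hC : 0 ≤ C) (ht : t ∈ Icc 0 b)
    (h : ∀ s ∈ Icc 0 b, ‖φ s - ψ s‖ ≤ C) :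
    ‖(∫ s in (0:ℝ)..t, φ s) - ∫ s in (0:ℝ)..t, ψ s‖ ≤ b * C := by
  have hsub : Icc 0 t ⊆ Icc 0 b := Icc_subset_Icc_right ht.2
  rw [← intervalIntegral.integral_sub ((hφ.mono hsub).intervalIntegrable_of_Icc ht.1)
    ((hψ.mono hsub).intervalIntegrable_of_Icc ht.1)]
  exact norm_intervalIntegral_le_mul hC ht h

end Integral

section RunningMax

variable {ι : Type*}

noncomputable def runningMax (g : ι → ℝ → ℝ) (x : ℝ → EuclideanSpace ℝ ι) (s : ℝ) :
    EuclideanSpace ℝ ι :=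
  (WithLp.equiv 2 (ι → ℝ)).symm fun i => sSup ((fun τ => g i (x τ i)) '' Icc 0 s)

variable {g : ι → ℝ → ℝ} {x y : ℝ → EuclideanSpace ℝ ι} {b s : ℝ}

theorem continuousOn_runningMax (hg : ∀ i, Continuous (g i)) (hx : ContinuousOn x (Icc 0 b)) :
    ContinuousOn (runningMax g x) (Icc 0 b) :=
  (PiLp.continuous_toLp 2 _).comp_continuousOn <| continuousOn_pi.2 fun i =>
    continuousOn_sSup_image_Icc ((hg i).comp_continuousOn (by fun_prop))

theorem runningMax_apply_mem_image {i : ι} {K : Set ℝ} (hg : Continuous (g i))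
    (hx : ContinuousOn x (Icc 0 b)) (hs : s ∈ Icc 0 b) (hK : ∀ τ ∈ Icc 0 b, x τ i ∈ K) :
    runningMax g x s i ∈ g i '' K := by
  have hsub : Icc 0 s ⊆ Icc 0 b := Icc_subset_Icc_right hs.2
  obtain ⟨τ, hτ, hτ_eq⟩ := (isCompact_Icc.image_of_continuousOn
    (hg.comp_continuousOn ((by fun_prop : ContinuousOn (fun τ => x τ i) _).mono hsub)))
    |>.sSup_mem ((nonempty_Icc.2 hs.1).image _)
  exact ⟨x τ i, hK τ (hsub hτ), hτ_eq⟩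

theorem norm_runningMax_sub_le [Fintype ι] {K : ι → Set ℝ} {Lg S : ℝ}
    (hg : ∀ i, Continuous (g i)) (hLg : 0 ≤ Lg)
    (hgL : ∀ i, ∀ u ∈ K i, ∀ v ∈ K i, |g i u - g i v| ≤ Lg * |u - v|)
    (hx : ContinuousOn x (Icc 0 b)) (hy : ContinuousOn y (Icc 0 b))
    (hxK : ∀ τ ∈ Icc 0 b, ∀ i, x τ i ∈ K i) (hyK : ∀ τ ∈ Icc 0 b, ∀ i, y τ i ∈ K i)
    (hS : ∀ τ ∈ Icc 0 b, ‖x τ - y τ‖ ≤ S) (hs : s ∈ Icc 0 b) :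
    ‖runningMax g x s - runningMax g y s‖ ≤ √(Fintype.card ι) * (Lg * S) := by
  have hsub : Icc 0 s ⊆ Icc 0 b := Icc_subset_Icc_right hs.2
  have hbdd : ∀ z : ℝ → EuclideanSpace ℝ ι, ContinuousOn z (Icc 0 b) → ∀ i,
      BddAbove ((fun τ => g i (z τ i)) '' Icc 0 s) := fun z hz i =>
    (isCompact_Icc.image_of_continuousOn ((hg i).comp_continuousOn
      ((by fun_prop : ContinuousOn (fun τ => z τ i) _).mono hsub))).bddAbove
  have hS0 : 0 ≤ S := (norm_nonneg _).trans (hS s hs)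
  refine EuclideanSpace.norm_le_sqrt_card_mul _ (by positivity) fun i =>
    abs_sSup_image_sub_sSup_image_le (nonempty_Icc.2 hs.1) (hbdd x hx i) (hbdd y hy i)
      fun τ hτ => ?_
  calc |g i (x τ i) - g i (y τ i)| ≤ Lg * |x τ i - y τ i| :=
        hgL i _ (hxK τ (hsub hτ) i) _ (hyK τ (hsub hτ) i)
    _ ≤ Lg * S := by
      gcongr
      exact (EuclideanSpace.abs_apply_sub_le_norm_sub _ _ i).trans (hS τ (hsub hτ))

end RunningMax

theorem picard_operator_contraction_general
    (m : ℕ) (x₀ : EuclideanSpace ℝ (Fin m))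
    (f : ℝ → EuclideanSpace ℝ (Fin m) → EuclideanSpace ℝ (Fin m) → EuclideanSpace ℝ (Fin m))
    (g : Fin m → ℝ → ℝ)
    (hf : ContinuousOn
      (fun p : ℝ × EuclideanSpace ℝ (Fin m) × EuclideanSpace ℝ (Fin m) => f p.1 p.2.1 p.2.2)
      (Set.Ici 0 ×ˢ Set.univ ×ˢ Set.univ))
    (hg : ∀ i, Continuous (g i))
    (α T M L Lα : ℝ)
    (hM : IsGreatest
      ((fun p : ℝ × EuclideanSpace ℝ (Fin m) × EuclideanSpace ℝ (Fin m) => ‖f p.1 p.2.1 p.2.2‖) ''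
        (Set.Icc 0 T ×ˢ {u | ∀ i, u i ∈ Set.Icc (x₀ i - α) (x₀ i + α)} ×ˢ
          {v | ∀ i, v i ∈ g i '' Set.Icc (x₀ i - α) (x₀ i + α)})) M)
    (hMpos : 0 < M) (hL : 0 < L) (hLα : 0 < Lα)
    (hfL : ∀ t ∈ Set.Icc (0:ℝ) T, ∀ u₁ u₂ v₁ v₂ : EuclideanSpace ℝ (Fin m),
      (∀ i, u₁ i ∈ Set.Icc (x₀ i - α) (x₀ i + α)) →
      (∀ i, u₂ i ∈ Set.Icc (x₀ i - α) (x₀ i + α)) →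
      (∀ i, v₁ i ∈ g i '' Set.Icc (x₀ i - α) (x₀ i + α)) →
      (∀ i, v₂ i ∈ g i '' Set.Icc (x₀ i - α) (x₀ i + α)) →
      ‖f t u₁ v₁ - f t u₂ v₂‖ ≤ L * (‖u₁ - u₂‖ + ‖v₁ - v₂‖))
    (hgL : ∀ i, ∀ x ∈ Set.Icc (x₀ i - α) (x₀ i + α), ∀ y ∈ Set.Icc (x₀ i - α) (x₀ i + α),
      |g i x - g i y| ≤ Lα * |x - y|)
    (T' : ℝ)
    (hT' : T' < min (min (α / M) (1 / (L * (1 + Lα * Real.sqrt m)))) T)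
    (F : (ℝ → EuclideanSpace ℝ (Fin m)) → ℝ → EuclideanSpace ℝ (Fin m))
    (hF : ∀ x : ℝ → EuclideanSpace ℝ (Fin m), ∀ t : ℝ,
      F x t = x₀ + ∫ s in (0:ℝ)..t,
        f s (x s) ((WithLp.equiv 2 (Fin m → ℝ)).symm
          fun i => sSup ((fun τ => g i (x τ i)) '' Set.Icc 0 s))) :
    (∀ x : ℝ → EuclideanSpace ℝ (Fin m), ContinuousOn x (Set.Icc 0 T') →
      (∀ t ∈ Set.Icc (0:ℝ) T', ‖x t - x₀‖ ≤ α) →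
      ContinuousOn (F x) (Set.Icc 0 T') ∧ ∀ t ∈ Set.Icc (0:ℝ) T', ‖F x t - x₀‖ ≤ α) ∧
    (∀ x y : ℝ → EuclideanSpace ℝ (Fin m), ContinuousOn x (Set.Icc 0 T') →
      ContinuousOn y (Set.Icc 0 T') →
      (∀ t ∈ Set.Icc (0:ℝ) T', ‖x t - x₀‖ ≤ α) → (∀ t ∈ Set.Icc (0:ℝ) T', ‖y t - x₀‖ ≤ α) →
      ∀ t ∈ Set.Icc (0:ℝ) T', ‖F x t - F y t‖ ≤
        T' * L * (1 + Real.sqrt m * Lα) * sSup ((fun s => ‖x s - y s‖) '' Set.Icc 0 T')) ∧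
    T' * L * (1 + Real.sqrt m * Lα) < 1 := by
  have hF' : ∀ x t, F x t = x₀ + ∫ s in (0:ℝ)..t, f s (x s) (runningMax g x s) := hF
  have hT'T : T' ≤ T := hT'.le.trans (min_le_right _ _)
  have hT'M : T' * M < α :=
    (lt_div_iff₀ hMpos).1 (hT'.trans_le ((min_le_left _ _).trans (min_le_left _ _)))
  have hcontr : T' * L * (1 + √m * Lα) < 1 :=
    calc T' * L * (1 + √m * Lα) = T' * (L * (1 + Lα * √m)) := by ring
      _ < 1 := (lt_div_iff₀ (by positivity)).1
        (hT'.trans_le ((min_le_left _ _).trans (min_le_right _ _)))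
  have hbox : ∀ x : ℝ → EuclideanSpace ℝ (Fin m), (∀ t ∈ Icc (0:ℝ) T', ‖x t - x₀‖ ≤ α) →
      ∀ s ∈ Icc (0:ℝ) T', ∀ i, x s i ∈ Icc (x₀ i - α) (x₀ i + α) := fun x hxα s hs =>
    EuclideanSpace.apply_mem_Icc_of_norm_sub_le (hxα s hs)
  have hmax : ∀ x : ℝ → EuclideanSpace ℝ (Fin m), ContinuousOn x (Icc 0 T') →
      (∀ t ∈ Icc (0:ℝ) T', ‖x t - x₀‖ ≤ α) →
      ∀ s ∈ Icc (0:ℝ) T', ∀ i, runningMax g x s i ∈ g i '' Icc (x₀ i - α) (x₀ i + α) :=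
    fun x hx hxα s hs i => runningMax_apply_mem_image (hg i) hx hs fun τ hτ => hbox x hxα τ hτ i
  have hcont : ∀ x : ℝ → EuclideanSpace ℝ (Fin m), ContinuousOn x (Icc 0 T') →
      ContinuousOn (fun s => f s (x s) (runningMax g x s)) (Icc 0 T') := fun x hx =>
    hf.comp (continuousOn_id.prodMk (hx.prodMk (continuousOn_runningMax hg hx)))
      fun s hs => ⟨hs.1, mem_univ _, mem_univ _⟩
  refine ⟨fun x hx hxα => ⟨?_, fun t ht => ?_⟩, fun x y hx hy hxα hyα t ht => ?_, hcontr⟩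
  · exact (continuousOn_const.add (hcont x hx).continuousOn_primitive_Icc).congr
      fun t _ => hF' x t
  · rw [hF' x t, add_sub_cancel_left]
    refine (norm_intervalIntegral_le_mul hMpos.le ht fun s hs => hM.2 ?_).trans hT'M.le
    exact ⟨(s, x s, runningMax g x s),
      ⟨⟨hs.1, hs.2.trans hT'T⟩, hbox x hxα s hs, hmax x hx hxα s hs⟩, rfl⟩
  · set S := sSup ((fun s => ‖x s - y s‖) '' Icc 0 T')
    have hS : ∀ s ∈ Icc (0:ℝ) T', ‖x s - y s‖ ≤ S := fun s hs =>
      le_csSup (isCompact_Icc.image_of_continuousOn (hx.sub hy).norm).bddAbove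
        (mem_image_of_mem _ hs)
    have hintegrand : ∀ s ∈ Icc (0:ℝ) T',
        ‖f s (x s) (runningMax g x s) - f s (y s) (runningMax g y s)‖ ≤
          L * (1 + √m * Lα) * S := fun s hs =>
      calc _ ≤ L * (‖x s - y s‖ + ‖runningMax g x s - runningMax g y s‖) :=
            hfL s ⟨hs.1, hs.2.trans hT'T⟩ _ _ _ _ (hbox x hxα s hs) (hbox y hyα s hs)
              (hmax x hx hxα s hs) (hmax y hy hyα s hs)
        _ ≤ L * (S + √m * (Lα * S)) := by
          gcongr
          · exact hS s hs
          · simpa using norm_runningMax_sub_le hg hLα.le hgL hx hy (hbox x hxα) (hbox y hyα)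
              hS hs
        _ = L * (1 + √m * Lα) * S := by ring
    have hS0 : 0 ≤ S := (norm_nonneg _).trans (hS t ht)
    rw [hF' x t, hF' y t, add_sub_add_left_eq_sub]
    exact (norm_intervalIntegral_sub_le_mul (hcont x hx) (hcont y hy) (by positivity) ht
      hintegrand).trans_eq (by ring)

/-- The Picard operator `F(x)(t) = x₀ + ∫₀ᵗ f(s, x(s), (max_{[0,s]} gᵢ∘xᵢ)ᵢ) ds` maps the ball
`X = {x ∈ C([0,T̄];ℝᵐ) : ‖x(t) − x₀‖ ≤ α}` into itself and satisfies
`‖F(x) − F(y)‖_∞ ≤ T̄ L (1 + √m L_α) ‖x − y‖_∞` on `X`; in particular, since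
`T̄ L (1 + √m L_α) < 1`, `F` is a contraction on `X`. -/
theorem picard_operator_contraction
    (m : ℕ) (hm : 1 ≤ m) (x₀ : EuclideanSpace ℝ (Fin m))
    (f : ℝ → EuclideanSpace ℝ (Fin m) → EuclideanSpace ℝ (Fin m) → EuclideanSpace ℝ (Fin m))
    (g : Fin m → ℝ → ℝ)
    (hf : ContinuousOn
      (fun p : ℝ × EuclideanSpace ℝ (Fin m) × EuclideanSpace ℝ (Fin m) => f p.1 p.2.1 p.2.2)
      (Set.Ici 0 ×ˢ Set.univ ×ˢ Set.univ))
    (hg : ∀ i, Continuous (g i))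
    (α T M L Lα : ℝ) (hα : 0 < α) (hT : 0 < T)
    (hM : IsGreatest
      ((fun p : ℝ × EuclideanSpace ℝ (Fin m) × EuclideanSpace ℝ (Fin m) => ‖f p.1 p.2.1 p.2.2‖) ''
        (Set.Icc 0 T ×ˢ {u | ∀ i, u i ∈ Set.Icc (x₀ i - α) (x₀ i + α)} ×ˢ
          {v | ∀ i, v i ∈ g i '' Set.Icc (x₀ i - α) (x₀ i + α)})) M)
    (hMpos : 0 < M) (hL : 0 < L) (hLα : 0 < Lα)
    (hfL : ∀ t ∈ Set.Icc (0:ℝ) T, ∀ u₁ u₂ v₁ v₂ : EuclideanSpace ℝ (Fin m),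
      (∀ i, u₁ i ∈ Set.Icc (x₀ i - α) (x₀ i + α)) →
      (∀ i, u₂ i ∈ Set.Icc (x₀ i - α) (x₀ i + α)) →
      (∀ i, v₁ i ∈ g i '' Set.Icc (x₀ i - α) (x₀ i + α)) →
      (∀ i, v₂ i ∈ g i '' Set.Icc (x₀ i - α) (x₀ i + α)) →
      ‖f t u₁ v₁ - f t u₂ v₂‖ ≤ L * (‖u₁ - u₂‖ + ‖v₁ - v₂‖))
    (hgL : ∀ i, ∀ x ∈ Set.Icc (x₀ i - α) (x₀ i + α), ∀ y ∈ Set.Icc (x₀ i - α) (x₀ i + α),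
      |g i x - g i y| ≤ Lα * |x - y|)
    (T' : ℝ) (hT'pos : 0 < T')
    (hT' : T' < min (min (α / M) (1 / (L * (1 + Lα * Real.sqrt m)))) T)
    (F : (ℝ → EuclideanSpace ℝ (Fin m)) → ℝ → EuclideanSpace ℝ (Fin m))
    (hF : ∀ x : ℝ → EuclideanSpace ℝ (Fin m), ∀ t : ℝ,
      F x t = x₀ + ∫ s in (0:ℝ)..t,
        f s (x s) ((WithLp.equiv 2 (Fin m → ℝ)).symm
          fun i => sSup ((fun τ => g i (x τ i)) '' Set.Icc 0 s))) :
    (∀ x : ℝ → EuclideanSpace ℝ (Fin m), ContinuousOn x (Set.Icc 0 T') →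
      (∀ t ∈ Set.Icc (0:ℝ) T', ‖x t - x₀‖ ≤ α) →
      ContinuousOn (F x) (Set.Icc 0 T') ∧ ∀ t ∈ Set.Icc (0:ℝ) T', ‖F x t - x₀‖ ≤ α) ∧
    (∀ x y : ℝ → EuclideanSpace ℝ (Fin m), ContinuousOn x (Set.Icc 0 T') →
      ContinuousOn y (Set.Icc 0 T') →
      (∀ t ∈ Set.Icc (0:ℝ) T', ‖x t - x₀‖ ≤ α) → (∀ t ∈ Set.Icc (0:ℝ) T', ‖y t - x₀‖ ≤ α) →
      ∀ t ∈ Set.Icc (0:ℝ) T', ‖F x t - F y t‖ ≤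
        T' * L * (1 + Real.sqrt m * Lα) * sSup ((fun s => ‖x s - y s‖) '' Set.Icc 0 T')) ∧
    T' * L * (1 + Real.sqrt m * Lα) < 1 :=
  picard_operator_contraction_general m x₀ f g hf hg α T M L Lα hM hMpos hL hLα hfL hgL T' hT' F hF
end
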